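/- Let a : ℝ → ℝ be twice continuously differentiable, positive, nonconstant, and periodic with some period P > 0, and let H(t) = a'(t)/a(t). Then the finite-interval open-FRW ANEC integrals I(T₋,T₊) = ∫_{T₋}^{T₊} (−2·(H'(t) + 1/a(t)²))/a(t) dt tend to −∞ as T₋ → −∞ and T₊ → +∞. -/

import Mathlib

/-!
Write `g = H / a`. Since `g' = H' / a - H² / a`, the integrand splits as
`-2 g' - 2 H² / a - 2 / a³ ≤ -2 g' - 2 / M³`, where `M` bounds the periodic scale factor `a`.
The total derivative integrates to `-2 (g T₊ - g T₋)`, which stays bounded because `g` is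
continuous and periodic, while the curvature term contributes at most `-(2 / M³)(T₊ - T₋)`.
-/

open Filter MeasureTheory Set

theorem Function.Periodic.deriv {𝕜 F : Type*} [NontriviallyNormedField 𝕜] [NormedAddCommGroup F]
    [NormedSpace 𝕜 F] {f : 𝕜 → F} {c : 𝕜} (hf : Function.Periodic f c) :
    Function.Periodic (_root_.deriv f) c := fun x => by
  rw [← deriv_comp_add_const, funext hf]

theorem tendsto_snd_sub_fst_atBot_prod_atTop {α : Type*} [AddCommGroup α] [LinearOrder α]
    [IsOrderedAddMonoid α] :
    Tendsto (fun p : α × α => p.2 - p.1) (atBot ×ˢ atTop) atTop := by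
  simpa only [sub_eq_add_neg, Function.comp_def] using
    tendsto_snd.atTop_add_atTop (tendsto_neg_atBot_atTop.comp tendsto_fst)

theorem intervalIntegral_le_sub_sub_of_le_deriv_sub {f G G' : ℝ → ℝ} {a b c : ℝ} (hab : a ≤ b)
    (hG : ∀ t, HasDerivAt G (G' t) t) (hG' : IntervalIntegrable G' volume a b)
    (hf : IntervalIntegrable f volume a b) (hfG : ∀ t, f t ≤ G' t - c) :
    ∫ t in a..b, f t ≤ G b - G a - c * (b - a) :=
  calc ∫ t in a..b, f t ≤ ∫ t in a..b, (G' t - c) :=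
        intervalIntegral.integral_mono_on hab hf (hG'.sub intervalIntegrable_const)
          fun t _ => hfG t
    _ = G b - G a - c * (b - a) := by
        rw [intervalIntegral.integral_sub hG' intervalIntegrable_const,
          intervalIntegral.integral_eq_sub_of_hasDerivAt (fun t _ => hG t) hG',
          intervalIntegral.integral_const, smul_eq_mul, mul_comm]

theorem tendsto_intervalIntegral_atBot_of_le_deriv_sub {f G G' : ℝ → ℝ} {c : ℝ} (hc : 0 < c)
    (hG : ∀ t, HasDerivAt G (G' t) t) (hG' : Continuous G') (hGb : Bornology.IsBounded (range G))
    (hf : Continuous f) (hfG : ∀ t, f t ≤ G' t - c) :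
    Tendsto (fun p : ℝ × ℝ => ∫ t in p.1..p.2, f t) (atBot ×ˢ atTop) atBot := by
  obtain ⟨K, hK⟩ := isBounded_iff_forall_norm_le.mp hGb
  have hGK : ∀ t, |G t| ≤ K := fun t => hK _ (mem_range_self t)
  have hlinear : Tendsto (fun p : ℝ × ℝ => 2 * K - c * (p.2 - p.1)) (atBot ×ˢ atTop) atBot :=
    tendsto_atBot_add_const_left _ _ <| tendsto_neg_atTop_atBot.comp <|
      tendsto_snd_sub_fst_atBot_prod_atTop.const_mul_atTop hc
  refine tendsto_atBot_mono' _ ?_ hlinear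
  filter_upwards [prod_mem_prod (Iic_mem_atBot 0) (Ici_mem_atTop 0)] with p hp
  have hle : p.1 ≤ p.2 := le_trans hp.1 hp.2
  have hGdiff : G p.2 - G p.1 ≤ 2 * K := by
    linarith [(abs_le.mp (hGK p.1)).1, (abs_le.mp (hGK p.2)).2]
  linarith [intervalIntegral_le_sub_sub_of_le_deriv_sub hle hG (hG'.intervalIntegrable _ _)
    (hf.intervalIntegrable _ _) hfG]

theorem open_FRW_integrand_le {x x' h h' M : ℝ} (hx : 0 < x) (hxM : x ≤ M) (hh : h = x' / x) :
    (-2 * (h' + 1 / x ^ 2)) / x ≤ -2 * ((h' * x - h * x') / x ^ 2) - 2 / M ^ 3 := by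
  have hsplit : (-2 * (h' + 1 / x ^ 2)) / x
      = -2 * ((h' * x - h * x') / x ^ 2) - 2 * h ^ 2 / x - 2 / x ^ 3 := by
    subst hh
    field_simp
    ring
  have hcurv : 2 / M ^ 3 ≤ 2 / x ^ 3 := by gcongr
  have hkin : 0 ≤ 2 * h ^ 2 / x := by positivity
  linarith

theorem contDiff_one_of_eq_deriv_div {a H : ℝ → ℝ} (ha : ContDiff ℝ 2 a) (hpos : ∀ t, 0 < a t)
    (hH : ∀ t, H t = deriv a t / a t) : ContDiff ℝ 1 H := by
  rw [funext hH]
  exact (ha.deriv' (n := 1)).div (ha.of_le one_le_two) fun t => (hpos t).ne'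

theorem periodic_open_FRW_ANEC_diverges_general
    (a H : ℝ → ℝ) (P : ℝ) (hP : 0 < P) (ha : ContDiff ℝ 2 a)
    (hpos : ∀ t, 0 < a t) (hper : Function.Periodic a P)
    (hH : ∀ t, H t = deriv a t / a t) :
    Tendsto (fun p : ℝ × ℝ =>
        ∫ t in p.1..p.2, (-2 * (deriv H t + 1 / (a t) ^ 2)) / a t)
      (atBot ×ˢ atTop) atBot := by
  have hH1 : ContDiff ℝ 1 H := contDiff_one_of_eq_deriv_div ha hpos hH
  have ha1 : ContDiff ℝ 1 a := ha.of_le one_le_two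
  have hane : ∀ t, a t ≠ 0 := fun t => (hpos t).ne'
  have hHper : Function.Periodic H P := fun t => by rw [hH, hH, hper.deriv t, hper t]
  obtain ⟨M, hM⟩ := (hper.compact_of_continuous hP.ne' ha.continuous).bddAbove
  have hM0 : 0 < M := (hpos 0).trans_le (hM (mem_range_self 0))
  have hGper : Function.Periodic (fun t => -2 * (H t / a t)) P := fun t => by
    simp only [hHper t, hper t]
  have hGb := hGper.isBounded_of_continuous hP.ne'
    (continuous_const.mul (hH1.continuous.div ha.continuous hane))
  have hGderiv (t : ℝ) := ((hH1.differentiable one_ne_zero t).hasDerivAt.div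
    (ha1.differentiable one_ne_zero t).hasDerivAt (hane t)).const_mul (-2)
  have hasq : ∀ t, a t ^ 2 ≠ 0 := fun t => pow_ne_zero 2 (hane t)
  have hG' : Continuous fun t => -2 * ((deriv H t * a t - H t * deriv a t) / a t ^ 2) :=
    continuous_const.mul <| (((hH1.continuous_deriv le_rfl).mul ha.continuous).sub
      (hH1.continuous.mul (ha1.continuous_deriv le_rfl))).div (ha.continuous.pow 2) hasq
  have hintegrand : Continuous fun t => (-2 * (deriv H t + 1 / (a t) ^ 2)) / a t :=
    (continuous_const.mul ((hH1.continuous_deriv le_rfl).add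
      (continuous_const.div (ha.continuous.pow 2) hasq))).div ha.continuous hane
  exact tendsto_intervalIntegral_atBot_of_le_deriv_sub (by positivity) hGderiv hG' hGb hintegrand
    fun t => open_FRW_integrand_le (hpos t) (hM (mem_range_self t)) (hH t)

/-- Periodic open FRW models (Corollary 4.5, open case): for a positive, nonconstant,
`C²`, periodic scale factor, the open (`k = −1`) finite-interval ANEC integrals tend
to `−∞`. -/
theorem periodic_open_FRW_ANEC_diverges
    (a H : ℝ → ℝ) (P : ℝ) (hP : 0 < P) (ha : ContDiff ℝ 2 a)
    (hpos : ∀ t, 0 < a t) (hper : Function.Periodic a P)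
    (hnc : ∃ s t, a s ≠ a t)
    (hH : ∀ t, H t = deriv a t / a t) :
    Tendsto (fun p : ℝ × ℝ =>
        ∫ t in p.1..p.2, (-2 * (deriv H t + 1 / (a t) ^ 2)) / a t)
      (atBot ×ˢ atTop) atBot :=
  periodic_open_FRW_ANEC_diverges_general a H P hP ha hpos hper hH
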